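/- arXiv:2306.01956 — 6 statements merged into one kernel-verified Lean document; each statement's English description precedes it below -/
import Mathlib

section
/- Let R be a subring of ℚ and suppose 𝔠 assigns to each subset σ ⊆ {1,…,m} a positive natural number 𝔠_σ with 𝔠_∅ = 1, 𝔠_{{i}} = 1 for all i, and 𝔠_{σ'}·𝔠_{σ''} ∣ 𝔠_{σ'∪σ''} whenever σ' ∩ σ'' = ∅. Then there exist a coefficient sequence 𝔠' over R and a function u assigning to each subset σ a positive natural number u_σ whose image in R is a unit, such that 𝔠_σ = u_σ · 𝔠'_σ for every σ ⊆ {1,…,m}. -/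
/-!
Split each `𝔠_σ` along its prime factorization into the part `u_σ` built from primes that are
units in `R` and the complementary part `𝔠'_σ`. Both parts are multiplicative in `n` and
monotone under divisibility, so `𝔠'` inherits conditions (1) and (2) from `𝔠`, while
condition (3) holds for `𝔠'` because all primes invertible in `R` were moved into `u`.
-/

open Finset

namespace Nat

variable (P : ℕ → Prop) [DecidablePred P]

noncomputable def factorPart (n : ℕ) : ℕ :=
  (n.factorization.filter P).prod (· ^ ·)

theorem factorization_factorPart (n : ℕ) :
    (factorPart P n).factorization = n.factorization.filter P :=
  prod_pow_factorization_eq_self fun _ hp =>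
    prime_of_mem_primeFactors (mem_filter.1 hp).1

theorem factorPart_ne_zero (n : ℕ) : factorPart P n ≠ 0 :=
  Finsupp.prod_ne_zero_iff.2 fun _ hp =>
    pow_ne_zero _ (pos_of_mem_primeFactors (mem_filter.1 hp).1).ne'

@[simp]
theorem factorPart_one : factorPart P 1 = 1 := by
  simp [factorPart, Finsupp.filter_zero]

theorem factorPart_mul {a b : ℕ} (ha : a ≠ 0) (hb : b ≠ 0) :
    factorPart P (a * b) = factorPart P a * factorPart P b :=
  eq_of_factorization_eq' (factorPart_ne_zero P _)
    (mul_ne_zero (factorPart_ne_zero P a) (factorPart_ne_zero P b)) <| by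
    rw [factorization_mul (factorPart_ne_zero P a) (factorPart_ne_zero P b),
      factorization_factorPart, factorization_factorPart, factorization_factorPart,
      factorization_mul ha hb, Finsupp.filter_add]

theorem factorPart_dvd_factorPart {a b : ℕ} (h : a ∣ b) (hb : b ≠ 0) :
    factorPart P a ∣ factorPart P b := by
  obtain ⟨c, rfl⟩ := h
  rw [factorPart_mul P (left_ne_zero_of_mul hb) (right_ne_zero_of_mul hb)]
  exact dvd_mul_right _ _

theorem factorPart_mul_factorPart_not {n : ℕ} (hn : n ≠ 0) :
    factorPart P n * factorPart (¬P ·) n = n :=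
  eq_of_factorization_eq' (mul_ne_zero (factorPart_ne_zero P n) (factorPart_ne_zero _ n)) hn <| by
    rw [factorization_mul (factorPart_ne_zero P n) (factorPart_ne_zero _ n),
      factorization_factorPart, factorization_factorPart, Finsupp.filter_add_filter_not]

theorem coprime_factorPart_not {p : ℕ} (hp : p.Prime) (hP : P p) (n : ℕ) :
    Coprime (factorPart (¬P ·) n) p := by
  refine (hp.coprime_iff_not_dvd.2 fun hdvd => ?_).symm
  have := (hp.dvd_iff_one_le_factorization (factorPart_ne_zero _ n)).1 hdvd
  simp [factorization_factorPart, hP] at this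

theorem factorPart_mem {S : Submonoid ℕ} (hS : ∀ p, p.Prime → P p → p ∈ S) (n : ℕ) :
    factorPart P n ∈ S :=
  prod_mem fun p hp =>
    pow_mem (hS p (prime_of_mem_primeFactors (mem_filter.1 hp).1) (mem_filter.1 hp).2) _

end Nat

def Subring.natUnits {K : Type*} [CommRing K] (R : Subring K) : Submonoid ℕ where
  carrier := {n | ∃ v ∈ R, (n : K) * v = 1}
  one_mem' := ⟨1, R.one_mem, by simp⟩
  mul_mem' := by
    rintro a b ⟨v, hv, ha⟩ ⟨w, hw, hb⟩
    refine ⟨v * w, R.mul_mem hv hw, ?_⟩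
    rw [Nat.cast_mul, mul_mul_mul_comm, ha, hb, one_mul]

open Nat in
/-- if `𝔠` satisfies conditions 1) and 2) of a coefficient sequence,
then there is a coefficient sequence `𝔠'` over the subring `R ⊆ ℚ` and a function
`u` taking positive natural values whose images in `R` are units, with
`𝔠_σ = u_σ * 𝔠'_σ` for all `σ`. -/
theorem stmt_1 (m : ℕ) (R : Subring ℚ) (𝔠 : Finset (Fin m) → ℕ)
    (hpos : ∀ σ, 0 < 𝔠 σ)
    (hempty : 𝔠 ∅ = 1)
    (hsingle : ∀ i : Fin m, 𝔠 {i} = 1)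
    (hdvd : ∀ σ' σ'' : Finset (Fin m), Disjoint σ' σ'' →
      𝔠 σ' * 𝔠 σ'' ∣ 𝔠 (σ' ∪ σ'')) :
    ∃ 𝔠' u : Finset (Fin m) → ℕ,
      (∀ σ, 0 < 𝔠' σ) ∧
      𝔠' ∅ = 1 ∧
      (∀ i : Fin m, 𝔠' {i} = 1) ∧
      (∀ σ' σ'' : Finset (Fin m), Disjoint σ' σ'' →
        𝔠' σ' * 𝔠' σ'' ∣ 𝔠' (σ' ∪ σ'')) ∧
      (∀ σ, ∀ p : ℕ, p.Prime → (∃ v ∈ R, (p : ℚ) * v = 1) →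
        Nat.Coprime (𝔠' σ) p) ∧
      (∀ σ, 0 < u σ ∧ ∃ v ∈ R, (u σ : ℚ) * v = 1) ∧
      (∀ σ, 𝔠 σ = u σ * 𝔠' σ) := by
  classical
  let P : ℕ → Prop := (· ∈ R.natUnits)
  refine ⟨fun σ => factorPart (¬P ·) (𝔠 σ), fun σ => factorPart P (𝔠 σ),
    fun σ => pos_of_ne_zero (factorPart_ne_zero _ _), by simp [hempty], by simp [hsingle],
    fun σ' σ'' h => ?_, fun σ p hp hpR => coprime_factorPart_not P hp hpR _,
    fun σ => ⟨pos_of_ne_zero (factorPart_ne_zero _ _), factorPart_mem P (fun _ _ => id) _⟩,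
    fun σ => (factorPart_mul_factorPart_not P (hpos σ).ne').symm⟩
  rw [← factorPart_mul _ (hpos σ').ne' (hpos σ'').ne']
  exact factorPart_dvd_factorPart _ (hdvd σ' σ'' h) (hpos _).ne'
end

section
/- For m = 3 the map Φ restricted to normalized power sequences is not injective: there exist power sequences c and c̄ on the subsets of {1,2,3}, both satisfying the normalization c_i^{{i}} = c̄_i^{{i}} = 1 for all i, such that c ≠ c̄ but Φ(c)_σ = Φ(c̄)_σ for every σ ⊆ {1,2,3}. -/
/-! Raise a single exponent on the top face: `c_j^σ = 2` for `σ = {1,…,m}` and `1` otherwise.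
This is a normalized power sequence as soon as `m ≥ 2`, and its image under `Φ` is `2` on the
top face and `1` elsewhere whatever `j` is, so two different choices of `j` collide. -/

open Finset

variable {α : Type*} [Fintype α] [DecidableEq α]

def topBump (j : α) (σ : Finset α) (i : α) : ℕ :=
  if σ = univ ∧ i = j then 2 else 1

theorem topBump_pos (j : α) (σ : Finset α) (i : α) : 0 < topBump j σ i := by
  unfold topBump; split_ifs <;> norm_num

theorem topBump_of_notMem {j : α} {σ : Finset α} {i : α} (hi : i ∉ σ) : topBump j σ i = 1 := by
  have hσ : σ ≠ univ := fun h => hi (h ▸ mem_univ i)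
  simp [topBump, hσ]

theorem topBump_dvd_of_subset (j : α) {τ σ : Finset α} (h : τ ⊆ σ) (i : α) :
    topBump j τ i ∣ topBump j σ i := by
  by_cases hτ : τ = univ
  · rw [show σ = τ from (univ_subset_iff.mp (hτ ▸ h)).trans hτ.symm]
  · simp [topBump, hτ]

theorem topBump_singleton [Nontrivial α] (j i : α) : topBump j {i} i = 1 := by
  simp [topBump, singleton_ne_univ]

theorem prod_topBump (j : α) (σ : Finset α) :
    ∏ i ∈ σ, topBump j σ i = if σ = univ then 2 else 1 := by
  split_ifs with hσ
  · subst hσ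
    simp [topBump, prod_ite_eq']
  · simp [topBump, hσ]

theorem topBump_injective : Function.Injective (topBump (α := α)) := by
  intro j k h
  have hj := congrFun (congrFun h univ) j
  by_contra hjk
  simp [topBump, hjk] at hj

/-- for `m = 3` the map `Φ` restricted to normalized power sequences
is not injective. -/
theorem stmt_2 :
    ∃ c cbar : Finset (Fin 3) → Fin 3 → ℕ,
      (∀ σ i, 0 < c σ i) ∧
      (∀ σ i, i ∉ σ → c σ i = 1) ∧
      (∀ τ σ : Finset (Fin 3), τ ⊆ σ → ∀ i, c τ i ∣ c σ i) ∧
      (∀ i : Fin 3, c {i} i = 1) ∧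
      (∀ σ i, 0 < cbar σ i) ∧
      (∀ σ i, i ∉ σ → cbar σ i = 1) ∧
      (∀ τ σ : Finset (Fin 3), τ ⊆ σ → ∀ i, cbar τ i ∣ cbar σ i) ∧
      (∀ i : Fin 3, cbar {i} i = 1) ∧
      c ≠ cbar ∧
      (∀ σ : Finset (Fin 3), (∏ i ∈ σ, c σ i) = ∏ i ∈ σ, cbar σ i) :=
  ⟨topBump 0, topBump 1,
    topBump_pos 0, fun _ _ => topBump_of_notMem, fun _ _ => topBump_dvd_of_subset 0,
    topBump_singleton 0,
    topBump_pos 1, fun _ _ => topBump_of_notMem, fun _ _ => topBump_dvd_of_subset 1,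
    topBump_singleton 1,
    topBump_injective.ne (by decide),
    fun σ => by rw [prod_topBump, prod_topBump]⟩
end

section
/- Let m = 3 and define 𝔠 on subsets of {1,2,3} by 𝔠_σ = 2 if |σ| = 2 or |σ| = 3, and 𝔠_σ = 1 if |σ| ≤ 1. Then 𝔠 is not in the image of Φ: there is no power sequence c with c_i^{{i}} = 1 for all i satisfying Φ(c)_σ = 𝔠_σ for every σ ⊆ {1,2,3}. -/
/-!
The three values `c_i^{123}` multiply to the prime `2`, so all but one of them, say all but
`c_k^{123}`, equal `1`. On the edge `σ = {1,2,3} \ {k}` each `c_i^σ` divides `c_i^{123} = 1`,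
hence `Φ(c)_σ = 1`, whereas `𝔠_σ = 2`.
-/

open Finset

theorem Nat.exists_prod_erase_eq_one_of_prod_eq_prime {ι : Type*} [DecidableEq ι]
    {s : Finset ι} {f : ι → ℕ} {p : ℕ} (hp : p.Prime) (hprod : ∏ i ∈ s, f i = p) :
    ∃ k ∈ s, ∏ i ∈ s.erase k, f i = 1 := by
  obtain ⟨k, hks, a, hka⟩ := (hp.prime.dvd_finsetProd_iff f).mp hprod.symm.dvd
  refine ⟨k, hks, ?_⟩
  have : p * (a * ∏ i ∈ s.erase k, f i) = p * 1 := by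
    rw [mul_one, ← mul_assoc, ← hka, mul_prod_erase s f hks, hprod]
  exact Nat.eq_one_of_mul_eq_one_left (Nat.eq_of_mul_eq_mul_left hp.pos this)

/-- the coefficient sequence taking value `2` on subsets of
cardinality `2` or `3` (and `1` otherwise) is not in the image of `Φ`. -/
theorem stmt_3 :
    ¬ ∃ c : Finset (Fin 3) → Fin 3 → ℕ,
      (∀ σ i, 0 < c σ i) ∧
      (∀ σ i, i ∉ σ → c σ i = 1) ∧
      (∀ τ σ : Finset (Fin 3), τ ⊆ σ → ∀ i, c τ i ∣ c σ i) ∧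
      (∀ i : Fin 3, c {i} i = 1) ∧
      (∀ σ : Finset (Fin 3),
        (∏ i ∈ σ, c σ i) = if 2 ≤ σ.card then 2 else 1) := by
  rintro ⟨c, -, -, hdvd, -, hΦ⟩
  have huniv : ∏ i, c univ i = 2 := by simpa using hΦ univ
  obtain ⟨k, -, hk⟩ := Nat.exists_prod_erase_eq_one_of_prod_eq_prime Nat.prime_two huniv
  have hedge : ∏ i ∈ univ.erase k, c (univ.erase k) i = 2 := by
    simpa [card_erase_of_mem] using hΦ (univ.erase k)
  have : 2 ∣ 1 := hedge ▸ hk ▸ prod_dvd_prod_of_dvd _ _ fun i _ => hdvd _ _ (subset_univ _) i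
  omega
end

section
/- Let m = 3 and let c be a power sequence on the subsets of {1,2,3} with c_i^{{i}} = 1 for all i. If Φ(c)_σ = 2 for every two-element subset σ ⊆ {1,2,3}, then 4 divides Φ(c)_{{1,2,3}}. -/
/-!
Each edge `{i, j}` has `Φ(c)_{ij} = 2`, a prime, so `2` divides `c_i^{ij}` or `c_j^{ij}`, and hence,
by the divisibility along faces, `c_i` or `c_j` on the full simplex. So at most one of the three
factors of `Φ(c)_{123}` is odd, and `2 ^ 2` divides their product.
-/

open Finset

theorem exists_mem_prime_dvd_of_dvd_prod_face {ι M : Type*} [CommMonoidWithZero M]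
    {c : Finset ι → ι → M} (hdvd : ∀ τ σ : Finset ι, τ ⊆ σ → ∀ i, c τ i ∣ c σ i)
    {p : M} (hp : Prime p) {τ σ : Finset ι} (hτσ : τ ⊆ σ) (h : p ∣ ∏ i ∈ τ, c τ i) :
    ∃ i ∈ τ, p ∣ c σ i := by
  obtain ⟨i, hi, hpi⟩ := hp.exists_mem_finset_dvd h
  exact ⟨i, hi, hpi.trans (hdvd τ σ hτσ i)⟩

theorem pow_card_sub_one_dvd_prod_of_dvd_or_dvd {ι M : Type*} [Fintype ι] [CommMonoid M]
    {p : M} {f : ι → M} (h : ∀ i j, i ≠ j → p ∣ f i ∨ p ∣ f j) :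
    p ^ (Fintype.card ι - 1) ∣ ∏ i, f i := by
  classical
  set S := univ.filter fun i => p ∣ f i
  have hSc : #Sᶜ ≤ 1 := Finset.card_le_one.mpr fun a ha b hb => by
    by_contra hab
    simp only [S, mem_compl, mem_filter, mem_univ, true_and] at ha hb
    exact (h a b hab).elim ha hb
  have hS : Fintype.card ι - 1 ≤ #S := by
    have := card_add_card_compl S
    omega
  calc p ^ (Fintype.card ι - 1) ∣ p ^ #S := pow_dvd_pow p hS
    _ = ∏ _i ∈ S, p := (prod_const p).symm
    _ ∣ ∏ i ∈ S, f i := prod_dvd_prod_of_dvd _ _ fun i hi => (mem_filter.mp hi).2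
    _ ∣ ∏ i, f i := prod_dvd_prod_of_subset _ _ _ (subset_univ S)

theorem stmt_4_general (c : Finset (Fin 3) → Fin 3 → ℕ)
    (hdvd : ∀ τ σ : Finset (Fin 3), τ ⊆ σ → ∀ i, c τ i ∣ c σ i)
    (h2 : ∀ σ : Finset (Fin 3), σ.card = 2 → (∏ i ∈ σ, c σ i) = 2) :
    4 ∣ ∏ i ∈ (Finset.univ : Finset (Fin 3)), c Finset.univ i := by
  have key : ∀ i j : Fin 3, i ≠ j → 2 ∣ c univ i ∨ 2 ∣ c univ j := fun i j hij => by
    have hΦ : 2 ∣ ∏ k ∈ {i, j}, c {i, j} k := (h2 _ (card_pair hij)).symm ▸ dvd_rfl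
    obtain ⟨k, hk, h2k⟩ :=
      exists_mem_prime_dvd_of_dvd_prod_face hdvd Nat.prime_two.prime (subset_univ _) hΦ
    rcases mem_insert.mp hk with rfl | hk
    · exact .inl h2k
    · exact .inr (mem_singleton.mp hk ▸ h2k)
  simpa using pow_card_sub_one_dvd_prod_of_dvd_or_dvd key

/-- if `c` is a normalized power sequence for `m = 3` and
`Φ(c)_σ = 2` for every two-element subset `σ`, then `4 ∣ Φ(c)_{{1,2,3}}`. -/
theorem stmt_4 (c : Finset (Fin 3) → Fin 3 → ℕ)
    (hpos : ∀ σ i, 0 < c σ i)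
    (hout : ∀ σ i, i ∉ σ → c σ i = 1)
    (hdvd : ∀ τ σ : Finset (Fin 3), τ ⊆ σ → ∀ i, c τ i ∣ c σ i)
    (hnorm : ∀ i : Fin 3, c {i} i = 1)
    (h2 : ∀ σ : Finset (Fin 3), σ.card = 2 → (∏ i ∈ σ, c σ i) = 2) :
    4 ∣ ∏ i ∈ (Finset.univ : Finset (Fin 3)), c Finset.univ i :=
  stmt_4_general c hdvd h2
end

section
/- Fix a prime p. Every element of CS(p) lies in the group (inside ℚ^×) generated by the coefficient sequences 𝔠(τ) with |τ| ≥ 2: if 𝔠 assigns to each subset σ ⊆ {1,…,m} a power of p, with 𝔠_∅ = 1, 𝔠_{{i}} = 1 for all i, and 𝔠_{σ'}·𝔠_{σ''} ∣ 𝔠_{σ'∪σ''} for disjoint σ', σ'', then there exists z assigning an integer z_τ to each subset τ ⊆ {1,…,m} with |τ| ≥ 2 such that, for every σ, (𝔠_σ : ℚ) = ∏_{τ : |τ| ≥ 2} ((𝔠(τ)_σ : ℚ))^{z_τ}. -/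
/-!
Write `𝔠 σ = p ^ k σ`, so `k ∅ = 0` and `k {i} = 0`. The Möbius transform
`z τ = ∑_{ρ ⊆ τ} μ(ρ, τ) k ρ` on the Boolean lattice satisfies `k σ = ∑_{τ ⊆ σ} z τ`. Since
`z τ` only involves `k` on subsets of `τ`, it vanishes for `|τ| ≤ 1`, so only the `τ` with `|τ| ≥ 2`
contribute and `p ^ k σ = ∏_{τ ⊆ σ, |τ| ≥ 2} p ^ z τ`.
-/

open Finset IncidenceAlgebra

section MoebiusInversion

variable {𝕜 α : Type*} [Ring 𝕜] [PartialOrder α] [OrderBot α] [LocallyFiniteOrder α]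
  [DecidableEq α]

def moebiusTransform (f : α → 𝕜) (y : α) : 𝕜 :=
  ∑ w ∈ Iic y, mu 𝕜 w y * f w

theorem sum_Iic_moebiusTransform (f : α → 𝕜) (x : α) :
    ∑ y ∈ Iic x, moebiusTransform f y = f x := by
  calc ∑ y ∈ Iic x, ∑ w ∈ Iic y, mu 𝕜 w y * f w
      = ∑ w ∈ Iic x, ∑ y ∈ Icc w x, mu 𝕜 w y * f w :=
        sum_comm' fun y w => by
          simp only [mem_Iic, mem_Icc]
          exact ⟨fun ⟨hyx, hwy⟩ => ⟨⟨hwy, hyx⟩, hwy.trans hyx⟩,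
            fun ⟨⟨hwy, hyx⟩, _⟩ => ⟨hyx, hwy⟩⟩
    _ = ∑ w ∈ Iic x, if w = x then f w else 0 := by
        refine sum_congr rfl fun w _ => ?_
        rw [← sum_mul, sum_Icc_mu_right, ite_mul, one_mul, zero_mul]
    _ = f x := by simp

theorem moebiusTransform_eq_zero {f : α → 𝕜} {y : α} (hf : ∀ w ≤ y, f w = 0) :
    moebiusTransform f y = 0 :=
  sum_eq_zero fun w hw => by rw [hf w (mem_Iic.mp hw), mul_zero]

end MoebiusInversion

theorem zpow_sum₀ {ι G : Type*} [CommGroupWithZero G] {a : G} (ha : a ≠ 0) (s : Finset ι)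
    (f : ι → ℤ) : a ^ (∑ i ∈ s, f i) = ∏ i ∈ s, a ^ f i := by
  classical
  induction s using Finset.induction with
  | empty => simp
  | insert _ _ h ih => rw [sum_insert h, prod_insert h, zpow_add₀ ha, ih]

theorem stmt_15_general (m : ℕ) (p : ℕ) (hp : p.Prime)
    (𝔠 : Finset (Fin m) → ℕ)
    (hpow : ∀ σ : Finset (Fin m), ∃ k : ℕ, 𝔠 σ = p ^ k)
    (hempty : 𝔠 ∅ = 1)
    (hsingle : ∀ i : Fin m, 𝔠 {i} = 1) :
    ∃ z : Finset (Fin m) → ℤ,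
      ∀ σ : Finset (Fin m),
        (𝔠 σ : ℚ) =
          ∏ τ ∈ Finset.univ.filter (fun τ : Finset (Fin m) => 2 ≤ τ.card),
            ((if τ ⊆ σ then (p : ℚ) else 1)) ^ z τ := by
  choose k hk using hpow
  have hk_small : ∀ ρ : Finset (Fin m), ρ.card ≤ 1 → (k ρ : ℤ) = 0 := by
    intro ρ hρ
    have hc : 𝔠 ρ = 1 := by
      rcases Nat.le_one_iff_eq_zero_or_eq_one.mp hρ with h | h
      · rw [card_eq_zero.mp h, hempty]
      · obtain ⟨i, rfl⟩ := card_eq_one.mp h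
        exact hsingle i
    have := (Nat.pow_eq_one.mp (hk ρ ▸ hc)).resolve_left hp.one_lt.ne'
    exact_mod_cast this
  refine ⟨moebiusTransform fun ρ => (k ρ : ℤ), fun σ => ?_⟩
  have hz_small : ∀ τ : Finset (Fin m), ¬ 2 ≤ τ.card →
      moebiusTransform (fun ρ => (k ρ : ℤ)) τ = 0 := fun τ hτ =>
    moebiusTransform_eq_zero fun ρ hρ => hk_small ρ ((card_le_card hρ).trans (by omega))
  have hIic : univ.filter (· ⊆ σ) = Iic σ := by ext; simp
  rw [prod_filter_of_ne fun τ _ hne => by_contra fun hτ => hne (by rw [hz_small τ hτ, zpow_zero])]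
  calc (𝔠 σ : ℚ)
      = (p : ℚ) ^ ∑ τ ∈ Iic σ, moebiusTransform (fun ρ => (k ρ : ℤ)) τ := by
        rw [sum_Iic_moebiusTransform, hk σ]; push_cast; rw [zpow_natCast]
    _ = ∏ τ ∈ univ.filter (· ⊆ σ), (p : ℚ) ^ moebiusTransform (fun ρ => (k ρ : ℤ)) τ := by
        rw [hIic, zpow_sum₀ (by exact_mod_cast hp.ne_zero)]
    _ = _ := by
        rw [prod_filter]
        exact prod_congr rfl fun τ _ => by split_ifs <;> simp

/-- every element of `CS(p)` lies in the group inside `ℚˣ`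
generated by the coefficient sequences `𝔠(τ)` with `|τ| ≥ 2`. -/
theorem stmt_15 (m : ℕ) (p : ℕ) (hp : p.Prime)
    (𝔠 : Finset (Fin m) → ℕ)
    (hpow : ∀ σ : Finset (Fin m), ∃ k : ℕ, 𝔠 σ = p ^ k)
    (hempty : 𝔠 ∅ = 1)
    (hsingle : ∀ i : Fin m, 𝔠 {i} = 1)
    (hdvd : ∀ σ' σ'' : Finset (Fin m), Disjoint σ' σ'' →
      𝔠 σ' * 𝔠 σ'' ∣ 𝔠 (σ' ∪ σ'')) :
    ∃ z : Finset (Fin m) → ℤ,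
      ∀ σ : Finset (Fin m),
        (𝔠 σ : ℚ) =
          ∏ τ ∈ Finset.univ.filter (fun τ : Finset (Fin m) => 2 ≤ τ.card),
            ((if τ ⊆ σ then (p : ℚ) else 1)) ^ z τ :=
  stmt_15_general m p hp 𝔠 hpow hempty hsingle
end

section
/- Fix a prime p. Every element of PS(p) lies in the group (inside ℚ^×) generated by the power sequences c(τ,j) with j ∈ τ and |τ| ≥ 2: if c is a power sequence all of whose values c_i^σ are powers of p and which satisfies c_i^{{i}} = 1 for all i, then there exists z assigning an integer z(τ,j) to each pair (τ,j) with τ ⊆ {1,…,m}, |τ| ≥ 2 and j ∈ τ, such that for every subset σ ⊆ {1,…,m} and every i ∈ {1,…,m}: (c_i^σ : ℚ) = ∏_{(τ,j) : j ∈ τ, |τ| ≥ 2} ((c(τ,j)_i^σ : ℚ))^{z(τ,j)}. -/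
/-!
Write `c_i^σ = p ^ k(σ, i)`. The generator `c(τ, j)` raised to `z(τ, j)` contributes the factor
`p ^ z(τ, i)` at `(σ, i)` exactly when `j = i` and `τ ⊆ σ`, so we need `∑_{τ ⊆ σ} z(τ, i) = k(σ, i)`:
take `z(·, i)` to be the Möbius transform of `k(·, i)` on the Boolean lattice. It vanishes on every
`τ ∌ i` because `k(ρ, i) = 0` for `ρ ∌ i`, and on `τ = {i}` because of the normalization
`c_i^{{i}} = 1`; hence only the generators with `j ∈ τ` and `|τ| ≥ 2` occur.
-/

open Finset

theorem Finset.prod_zpow_eq_zpow_sum₀ {ι G₀ : Type*} [CommGroupWithZero G₀] {x : G₀} (hx : x ≠ 0)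
    (s : Finset ι) (z : ι → ℤ) : ∏ i ∈ s, x ^ z i = x ^ ∑ i ∈ s, z i := by
  induction s using Finset.cons_induction with
  | empty => simp
  | cons i s hi ih => rw [sum_cons, prod_cons, zpow_add₀ hx, ih]

namespace Finset

variable {α G : Type*} [AddCommGroup G]

theorem sum_Icc_neg_one_pow_card_sub [DecidableEq α] {ρ σ : Finset α} (h : ρ ⊆ σ) :
    ∑ τ ∈ Icc ρ σ, (-1 : ℤ) ^ (#τ - #ρ) = if ρ = σ then 1 else 0 := by
  have hinj : Set.InjOn (ρ ∪ ·) (σ \ ρ).powerset := fun s hs t ht hst => by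
    simp only [coe_powerset, Set.mem_preimage, Set.mem_powerset_iff, coe_subset] at hs ht
    rw [← union_sdiff_cancel_left (disjoint_of_subset_right hs disjoint_sdiff),
      ← union_sdiff_cancel_left (disjoint_of_subset_right ht disjoint_sdiff)]
    simp only at hst
    rw [hst]
  have hcard : ∀ s ∈ (σ \ ρ).powerset, #(ρ ∪ s) - #ρ = #s := fun s hs => by
    rw [card_union_of_disjoint (disjoint_of_subset_right (mem_powerset.1 hs) disjoint_sdiff),
      Nat.add_sub_cancel_left]
  rw [Icc_eq_image_powerset h, sum_image hinj, sum_congr rfl fun s hs => by rw [hcard s hs],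
    sum_powerset_neg_one_pow_card]
  exact if_congr (sdiff_eq_empty_iff_subset.trans ⟨h.antisymm, fun h' => h'.ge⟩) rfl rfl

def powersetMobius (f : Finset α → G) (τ : Finset α) : G :=
  ∑ ρ ∈ τ.powerset, (-1 : ℤ) ^ (#τ - #ρ) • f ρ

theorem sum_powerset_powersetMobius [DecidableEq α] (f : Finset α → G) (σ : Finset α) :
    ∑ τ ∈ σ.powerset, powersetMobius f τ = f σ := by
  have hswap : ∀ τ ρ, τ ∈ σ.powerset ∧ ρ ∈ τ.powerset ↔ τ ∈ Icc ρ σ ∧ ρ ∈ σ.powerset := by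
    simp only [mem_powerset, mem_Icc]
    exact fun τ ρ => ⟨fun h => ⟨⟨h.2, h.1⟩, h.2.trans h.1⟩, fun h => ⟨h.1.2, h.1.1⟩⟩
  calc ∑ τ ∈ σ.powerset, powersetMobius f τ
      = ∑ ρ ∈ σ.powerset, ∑ τ ∈ Icc ρ σ, (-1 : ℤ) ^ (#τ - #ρ) • f ρ := sum_comm' hswap
    _ = ∑ ρ ∈ σ.powerset, if ρ = σ then f ρ else 0 := sum_congr rfl fun ρ hρ => by
        rw [← sum_smul, sum_Icc_neg_one_pow_card_sub (mem_powerset.1 hρ), ite_smul, one_smul,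
          zero_smul]
    _ = f σ := by simp

theorem powersetMobius_eq_zero_of_notMem {f : Finset α → G} {a : α} (hf : ∀ ρ, a ∉ ρ → f ρ = 0)
    {τ : Finset α} (hτ : a ∉ τ) : powersetMobius f τ = 0 :=
  sum_eq_zero fun ρ hρ => by
    rw [hf ρ fun ha => hτ (mem_powerset.1 hρ ha), smul_zero]

theorem powersetMobius_singleton [DecidableEq α] (f : Finset α → G) (a : α) :
    powersetMobius f {a} = f {a} - f ∅ := by
  rw [powersetMobius, ← insert_empty_eq, sum_powerset_insert (notMem_empty a)]
  simp [sub_eq_neg_add]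

theorem mem_and_two_le_card_of_powersetMobius_ne_zero [DecidableEq α] {f : Finset α → G} {a : α}
    (hf : ∀ ρ, a ∉ ρ → f ρ = 0) (ha : f {a} = 0) {τ : Finset α}
    (hτ : powersetMobius f τ ≠ 0) : a ∈ τ ∧ 2 ≤ #τ := by
  have haτ : a ∈ τ := by_contra fun h => hτ (powersetMobius_eq_zero_of_notMem hf h)
  refine ⟨haτ, not_lt.1 fun hcard => hτ ?_⟩
  obtain rfl : {a} = τ :=
    eq_of_subset_of_card_le (singleton_subset_iff.2 haτ) (Nat.lt_succ_iff.1 hcard)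
  rw [powersetMobius_singleton, ha, hf ∅ (notMem_empty a), sub_zero]

end Finset

theorem prod_ite_zpow_eq_prod_powerset {α β M : Type*} [Fintype α] [DecidableEq α] [Fintype β]
    [DecidableEq β] [DivisionCommMonoid M] (x : M) (z : Finset α × β → ℤ)
    {S : Finset (Finset α × β)} (hS : ∀ tj ∉ S, z tj = 0) (σ : Finset α) (i : β) :
    ∏ tj ∈ S, (if i = tj.2 ∧ tj.1 ⊆ σ then x else 1) ^ z tj = ∏ τ ∈ σ.powerset, x ^ z (τ, i) := by
  rw [prod_subset (subset_univ S) fun tj _ htj => by rw [hS tj htj, zpow_zero],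
    Fintype.prod_prod_type]
  have hinner : ∀ τ : Finset α, ∏ j, (if i = j ∧ τ ⊆ σ then x else 1) ^ z (τ, j) =
      if τ ∈ σ.powerset then x ^ z (τ, i) else 1 := fun τ => by
    rw [Fintype.prod_eq_single i fun j hj => by rw [if_neg fun h => hj h.1.symm, one_zpow]]
    split_ifs <;> simp_all
  rw [Fintype.prod_congr _ _ hinner, prod_ite_mem, univ_inter]

theorem stmt_16_general (m : ℕ) (p : ℕ) (hp : p.Prime)
    (c : Finset (Fin m) → Fin m → ℕ)
    (hout : ∀ σ i, i ∉ σ → c σ i = 1)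
    (hnorm : ∀ i : Fin m, c {i} i = 1)
    (hpow : ∀ (σ : Finset (Fin m)) (i : Fin m), ∃ k : ℕ, c σ i = p ^ k) :
    ∃ z : Finset (Fin m) × Fin m → ℤ,
      ∀ (σ : Finset (Fin m)) (i : Fin m),
        (c σ i : ℚ) =
          ∏ tj ∈ Finset.univ.filter
              (fun tj : Finset (Fin m) × Fin m => tj.2 ∈ tj.1 ∧ 2 ≤ tj.1.card),
            ((if i = tj.2 ∧ tj.1 ⊆ σ then (p : ℚ) else 1)) ^ z tj := by
  choose k hk using hpow
  have hk_eq_zero {σ i} (h : c σ i = 1) : (k σ i : ℤ) = 0 := by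
    rw [hk, ← pow_zero p] at h
    exact_mod_cast Nat.pow_right_injective hp.two_le h
  let z : Finset (Fin m) × Fin m → ℤ := fun tj => powersetMobius (fun ρ => (k ρ tj.2 : ℤ)) tj.1
  have hz : ∀ tj ∉ Finset.univ.filter
      (fun tj : Finset (Fin m) × Fin m => tj.2 ∈ tj.1 ∧ 2 ≤ tj.1.card), z tj = 0 := by
    intro tj htj
    by_contra hne
    exact htj ((mem_filter_univ _).2 (mem_and_two_le_card_of_powersetMobius_ne_zero
      (fun ρ h => hk_eq_zero (hout ρ tj.2 h)) (hk_eq_zero (hnorm tj.2)) hne))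
  refine ⟨z, fun σ i => ?_⟩
  have hsum : ∑ τ ∈ σ.powerset, z (τ, i) = k σ i :=
    sum_powerset_powersetMobius (fun ρ => (k ρ i : ℤ)) σ
  rw [prod_ite_zpow_eq_prod_powerset _ z hz,
    prod_zpow_eq_zpow_sum₀ (Nat.cast_ne_zero.2 hp.ne_zero), hsum, zpow_natCast, hk, Nat.cast_pow]

/-- every element of `PS(p)` lies in the group inside `ℚˣ`
generated by the power sequences `c(τ,j)` with `j ∈ τ` and `|τ| ≥ 2`. -/
theorem stmt_16 (m : ℕ) (p : ℕ) (hp : p.Prime)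
    (c : Finset (Fin m) → Fin m → ℕ)
    (hpos : ∀ σ i, 0 < c σ i)
    (hout : ∀ σ i, i ∉ σ → c σ i = 1)
    (hdvd : ∀ τ σ : Finset (Fin m), τ ⊆ σ → ∀ i, c τ i ∣ c σ i)
    (hnorm : ∀ i : Fin m, c {i} i = 1)
    (hpow : ∀ (σ : Finset (Fin m)) (i : Fin m), ∃ k : ℕ, c σ i = p ^ k) :
    ∃ z : Finset (Fin m) × Fin m → ℤ,
      ∀ (σ : Finset (Fin m)) (i : Fin m),
        (c σ i : ℚ) =
          ∏ tj ∈ Finset.univ.filter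
              (fun tj : Finset (Fin m) × Fin m => tj.2 ∈ tj.1 ∧ 2 ≤ tj.1.card),
            ((if i = tj.2 ∧ tj.1 ⊆ σ then (p : ℚ) else 1)) ^ z tj :=
  stmt_16_general m p hp c hout hnorm hpow
end
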